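/- arXiv:1807.01343 — 4 statements merged into one kernel-verified Lean document; each statement's English description precedes it below -/
import Mathlib

section
/- If w : ℕ → ℝ is discretely concave, nondecreasing, w(0) = 0, and w(j) > 0 for j ≥ 1, then for all j, l with 1 ≤ j < l and j + l ≤ n: 1 + (j/w(j))*(f_MC(j) - f_MC(j+1)) ≥ w(l)/w(j) + (j/w(j))*f_MC(j) - (l/w(j))*f_MC(j+1), where f_MC(k) = w(k) - w(k-1). -/
theorem stmt_5 (w fMC : ℕ → ℝ) (n : ℕ)
    (h0 : w 0 = 0)
    (hmono : ∀ j, w j ≤ w (j + 1))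
    (hconc : ∀ j, 1 ≤ j → w (j + 1) + w (j - 1) ≤ 2 * w j)
    (hpos : ∀ j, 1 ≤ j → 0 < w j)
    (hfMC : ∀ k, fMC k = w k - w (k - 1))
    (hn : 1 ≤ n)
    (j l : ℕ) (hj : 1 ≤ j) (hjl : j < l) (hln : l ≤ n) (hsum : j + l ≤ n) :
    1 + ((j : ℝ) / w j) * (fMC j - fMC (j + 1)) ≥
      w l / w j + ((j : ℝ) / w j) * fMC j - ((l : ℝ) / w j) * fMC (j + 1) := by
  have hw : 0 < w j := hpos j hj
  have step : ∀ k, w (k + 2) - w (k + 1) ≤ w (k + 1) - w k := by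
    intro k
    have h := hconc (k + 1) (by omega)
    simp only [Nat.add_sub_cancel] at h
    linarith
  have incr : ∀ d, w (j + d + 1) - w (j + d) ≤ w (j + 1) - w j := by
    intro d
    induction d with
    | zero => simp
    | succ d ih =>
      have := step (j + d)
      have h2 : j + (d + 1) + 1 = j + d + 2 := by ring
      have h3 : j + (d + 1) = j + d + 1 := by ring
      rw [h2, h3]
      linarith
  have sum : ∀ m, w (j + m) - w j ≤ (m : ℝ) * (w (j + 1) - w j) := by
    intro m
    induction m with
    | zero => simp
    | succ m ih =>
      have := incr m
      push_cast
      have h3 : j + (m + 1) = j + m + 1 := by ring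
      rw [h3]
      nlinarith
  have key : w l - w j ≤ ((l : ℝ) - j) * (w (j + 1) - w j) := by
    have hm : j + (l - j) = l := by omega
    have := sum (l - j)
    rw [hm] at this
    have hc : ((l - j : ℕ) : ℝ) = (l : ℝ) - j := by
      push_cast [Nat.cast_sub hjl.le]; ring
    rw [hc] at this
    exact this
  have hf1 : fMC j = w j - w (j - 1) := hfMC j
  have hf2 : fMC (j + 1) = w (j + 1) - w j := by
    rw [hfMC (j + 1)]; simp
  rw [ge_iff_le, ← sub_nonneg]
  have heq : 1 + ((j : ℝ) / w j) * (fMC j - fMC (j + 1)) -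
      (w l / w j + ((j : ℝ) / w j) * fMC j - ((l : ℝ) / w j) * fMC (j + 1)) =
      (w j + ((l : ℝ) - j) * fMC (j + 1) - w l) / w j := by
    field_simp
    ring
  rw [heq]
  apply div_nonneg _ hw.le
  rw [hf2]
  linarith
end

section
/- Let w : ℕ → ℝ be discretely convex, nondecreasing, w(0) = 0, w(1) = 1, and w(j) > 0 for j ≥ 1. Let f : ℕ → ℝ with f(1) = 1 and f(j) ≥ 1 for all j ≥ 1. Let n ≥ 1, λ = w(n)/n, and suppose μ ≥ λ * j * f(j)/w(j) for all 1 ≤ j ≤ n. Then for all naturals a, b, x with a + x ≥ 1, b + x ≥ 1, a + x ≤ n, b + x ≤ n: μ ≥ w(b+x)/w(a+x) + λ*(a*f(a+x) - b*f(a+x+1))/w(a+x), where f(n+1) is interpreted as any value ≥ 1. -/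
/-!
For a convex `w` with `w 0 = 0` the chord slope `w t / t` is nondecreasing, so
`w (b + x) ≤ λ (b + x)` whenever `b + x ≤ n`. Since `f ≥ 1`, this bounds the numerator
`w (b + x) + λ (a f(a + x) - b f(a + x + 1))` by `λ (a + x) f(a + x)`, and the hypothesis on `μ`
at `j = a + x` finishes the proof.
-/

theorem le_mul_increment_of_convex {w : ℕ → ℝ} (hw0 : w 0 = 0)
    (hconv : ∀ j, 2 * w (j + 1) ≤ w (j + 2) + w j) (j : ℕ) :
    w j ≤ j * (w (j + 1) - w j) := by
  induction j with
  | zero => simp [hw0]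
  | succ j ih =>
    have hstep : w (j + 1) - w j ≤ w (j + 2) - w (j + 1) := by linarith [hconv j]
    calc w (j + 1) = w j + (w (j + 1) - w j) := by ring
      _ ≤ (j + 1) * (w (j + 1) - w j) := by linarith
      _ ≤ (j + 1) * (w (j + 2) - w (j + 1)) := by gcongr
      _ = ((j + 1 : ℕ) : ℝ) * (w (j + 1 + 1) - w (j + 1)) := by push_cast; ring

theorem mul_le_mul_of_convex_of_le {w : ℕ → ℝ} (hw0 : w 0 = 0)
    (hconv : ∀ j, 2 * w (j + 1) ≤ w (j + 2) + w j) {t m : ℕ} (htm : t ≤ m) :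
    m * w t ≤ t * w m := by
  rcases Nat.eq_zero_or_pos t with rfl | ht
  · simp [hw0]
  induction m, htm using Nat.le_induction with
  | base => exact le_rfl
  | succ m hm ih =>
    have hm0 : (0 : ℝ) < m := by exact_mod_cast ht.trans_le hm
    have hslope : w t ≤ t * (w (m + 1) - w m) := by
      refine le_of_mul_le_mul_left ?_ hm0
      calc m * w t ≤ t * w m := ih
        _ ≤ t * (m * (w (m + 1) - w m)) := by
          gcongr; exact le_mul_increment_of_convex hw0 hconv m
        _ = m * (t * (w (m + 1) - w m)) := by ring
    push_cast
    linarith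

theorem le_div_mul_of_convex_of_le {w : ℕ → ℝ} (hw0 : w 0 = 0)
    (hconv : ∀ j, 2 * w (j + 1) ≤ w (j + 2) + w j) {t m : ℕ} (htm : t ≤ m) :
    w t ≤ w m / m * t := by
  rcases Nat.eq_zero_or_pos t with rfl | ht
  · simp [hw0]
  have hm : (0 : ℝ) < m := by exact_mod_cast ht.trans_le htm
  rw [div_mul_eq_mul_div, le_div_iff₀ hm, mul_comm (w m), mul_comm (w t)]
  exact mul_le_mul_of_convex_of_le hw0 hconv htm

theorem stmt_7_general (w f : ℕ → ℝ) (n : ℕ) (lam mu : ℝ)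
    (h0 : w 0 = 0)
    (hconv : ∀ j, 1 ≤ j → w (j + 1) + w (j - 1) ≥ 2 * w j)
    (hpos : ∀ j, 1 ≤ j → 0 < w j)
    (hf : ∀ j, 1 ≤ j → 1 ≤ f j)
    (hlam : lam = w n / (n : ℝ))
    (hmu : ∀ j, 1 ≤ j → j ≤ n → mu ≥ lam * (j : ℝ) * f j / w j) :
    ∀ a b x : ℕ, 1 ≤ a + x → 1 ≤ b + x → a + x ≤ n → b + x ≤ n →
      mu ≥ w (b + x) / w (a + x) +
        lam * ((a : ℝ) * f (a + x) - (b : ℝ) * f (a + x + 1)) / w (a + x) := by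
  intro a b x hax hbx haxn hbxn
  have hconv' : ∀ j, 2 * w (j + 1) ≤ w (j + 2) + w j := fun j => by
    simpa using hconv (j + 1) (by omega)
  have hlam0 : 0 ≤ lam := hlam ▸ div_nonneg (hpos n (by omega)).le n.cast_nonneg
  have hwb : w (b + x) ≤ lam * (b + x) := by
    exact_mod_cast hlam ▸ le_div_mul_of_convex_of_le h0 hconv' hbxn
  have hfa := hf (a + x) hax
  have hfa1 := hf (a + x + 1) (by omega)
  have hnum : w (b + x) + lam * (a * f (a + x) - b * f (a + x + 1))
      ≤ lam * ((a + x : ℕ) : ℝ) * f (a + x) := by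
    push_cast
    nlinarith [mul_nonneg (mul_nonneg hlam0 x.cast_nonneg) (sub_nonneg.2 hfa),
      mul_nonneg (mul_nonneg hlam0 b.cast_nonneg) (sub_nonneg.2 hfa1)]
  rw [ge_iff_le, ← add_div]
  calc _ ≤ lam * ((a + x : ℕ) : ℝ) * f (a + x) / w (a + x) := by
        gcongr; exact (hpos _ hax).le
    _ ≤ mu := hmu (a + x) hax haxn

theorem stmt_7 (w f : ℕ → ℝ) (n : ℕ) (lam mu : ℝ)
    (h0 : w 0 = 0) (h1 : w 1 = 1)
    (hmono : ∀ j, w j ≤ w (j + 1))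
    (hconv : ∀ j, 1 ≤ j → w (j + 1) + w (j - 1) ≥ 2 * w j)
    (hpos : ∀ j, 1 ≤ j → 0 < w j)
    (hf1 : f 1 = 1)
    (hf : ∀ j, 1 ≤ j → 1 ≤ f j)
    (hn : 1 ≤ n)
    (hlam : lam = w n / (n : ℝ))
    (hmu : ∀ j, 1 ≤ j → j ≤ n → mu ≥ lam * (j : ℝ) * f j / w j) :
    ∀ a b x : ℕ, 1 ≤ a + x → 1 ≤ b + x → a + x ≤ n → b + x ≤ n →
      mu ≥ w (b + x) / w (a + x) +
        lam * ((a : ℝ) * f (a + x) - (b : ℝ) * f (a + x + 1)) / w (a + x) :=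
  stmt_7_general w f n lam mu h0 hconv hpos hf hlam hmu
end

section
/- The Gairing optimal covering mechanism f*(j) = (j-1)! * (1/((n-1)*(n-1)!) + Σ_{i=j}^{n-1} 1/i!) / (1/((n-1)*(n-1)!) + Σ_{i=1}^{n-1} 1/i!) satisfies f*(1) = 1 and is nonincreasing on [1, n]. -/
/-- The Gairing optimal covering mechanism. -/
noncomputable def gairing (n j : ℕ) : ℝ :=
  (Nat.factorial (j - 1) : ℝ) *
    (1 / (((n - 1 : ℕ) : ℝ) * (Nat.factorial (n - 1) : ℝ)) +
      ∑ i ∈ Finset.Icc j (n - 1), (1 : ℝ) / (Nat.factorial i : ℝ)) /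
    (1 / (((n - 1 : ℕ) : ℝ) * (Nat.factorial (n - 1) : ℝ)) +
      ∑ i ∈ Finset.Icc 1 (n - 1), (1 : ℝ) / (Nat.factorial i : ℝ))

/-!
Write `T j = 1 / (m * m!) + ∑_{i=j}^{m} 1 / i!` with `m = n - 1`, so that
`f*(j) = (j-1)! T j / T 1`. The boundary term is what makes the tail estimate
`T (j+1) ≤ 1 / (j * j!)` exact at `j = m`; it propagates downwards because
`1 / ((m+1) (m+1)!) + 1 / (m+1)! ≤ 1 / (m * m!)`. Then
`j! T (j+1) ≤ 1 / j = (j-1)! / j! ≤ (j-1)! T j`.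
-/

open Nat Finset

noncomputable def gairingTail (m j : ℕ) : ℝ :=
  1 / ((m : ℝ) * (m ! : ℝ)) + ∑ i ∈ Icc j m, (1 : ℝ) / (i ! : ℝ)

lemma gairing_succ_eq (m j : ℕ) :
    gairing (m + 1) j = ((j - 1) ! : ℝ) * gairingTail m j / gairingTail m 1 :=
  rfl

lemma gairingTail_nonneg (m j : ℕ) : 0 ≤ gairingTail m j := by
  unfold gairingTail
  positivity

lemma gairingTail_pos {m : ℕ} (hm : 1 ≤ m) (j : ℕ) : 0 < gairingTail m j := by
  have : 0 < (m : ℝ) := by exact_mod_cast hm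
  unfold gairingTail
  positivity

lemma gairingTail_eq_inv_factorial_add {m j : ℕ} (hjm : j ≤ m) :
    gairingTail m j = 1 / (j ! : ℝ) + gairingTail m (j + 1) := by
  simp only [gairingTail, Icc_eq_cons_Ioc hjm, sum_cons, ← Icc_add_one_left_eq_Ioc]
  ring

lemma one_div_mul_factorial_succ_add_le {m : ℕ} (hm : 1 ≤ m) :
    1 / (((m + 1 : ℕ) : ℝ) * ((m + 1) ! : ℝ)) + 1 / ((m + 1) ! : ℝ) ≤
      1 / ((m : ℝ) * (m ! : ℝ)) := by
  have hm' : (1 : ℝ) ≤ m := by exact_mod_cast hm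
  have hfac : 0 < (m ! : ℝ) := by positivity
  rw [factorial_succ, div_add_div _ _ (by positivity) (by positivity),
    div_le_div_iff₀ (by positivity) (by positivity)]
  push_cast
  -- after clearing denominators: `m (m + 2) ≤ (m + 1)²`
  nlinarith [mul_pos hfac hfac]

lemma gairingTail_succ_le {j m : ℕ} (hj : 1 ≤ j) (hjm : j ≤ m) :
    gairingTail m (j + 1) ≤ 1 / ((j : ℝ) * (j ! : ℝ)) := by
  induction m, hjm using Nat.le_induction with
  | base => simp [gairingTail]
  | succ m hjm ih =>
    have hstep := one_div_mul_factorial_succ_add_le (hj.trans hjm)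
    unfold gairingTail at ih ⊢
    rw [sum_Icc_succ_top (by omega)]
    linarith

lemma factorial_mul_gairingTail_succ_le {k m : ℕ} (hkm : k + 1 ≤ m) :
    ((k + 1) ! : ℝ) * gairingTail m (k + 2) ≤ (k ! : ℝ) * gairingTail m (k + 1) := by
  have hfac : 0 < ((k + 1) ! : ℝ) := by positivity
  calc ((k + 1) ! : ℝ) * gairingTail m (k + 2)
      ≤ ((k + 1) ! : ℝ) * (1 / (((k + 1 : ℕ) : ℝ) * ((k + 1) ! : ℝ))) :=
        mul_le_mul_of_nonneg_left (gairingTail_succ_le (by omega) hkm) hfac.le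
    _ = (k ! : ℝ) * (1 / ((k + 1) ! : ℝ)) := by
        rw [factorial_succ]
        push_cast
        field_simp
    _ ≤ (k ! : ℝ) * (1 / ((k + 1) ! : ℝ) + gairingTail m (k + 2)) := by
        gcongr
        exact le_add_of_nonneg_right (gairingTail_nonneg m _)
    _ = (k ! : ℝ) * gairingTail m (k + 1) := by
        rw [gairingTail_eq_inv_factorial_add (j := k + 1) hkm]

theorem stmt_12 (n : ℕ) (hn : 2 ≤ n) :
    gairing n 1 = 1 ∧
      ∀ j, 1 ≤ j → j + 1 ≤ n → gairing n (j + 1) ≤ gairing n j := by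
  obtain ⟨m, rfl⟩ : ∃ m, n = m + 1 := ⟨n - 1, by omega⟩
  have hT : 0 < gairingTail m 1 := gairingTail_pos (by omega) 1
  refine ⟨?_, fun j hj hjn => ?_⟩
  · simp [gairing_succ_eq, hT.ne']
  · obtain ⟨k, rfl⟩ : ∃ k, j = k + 1 := ⟨j - 1, by omega⟩
    simp only [gairing_succ_eq, Nat.add_sub_cancel]
    exact div_le_div_of_nonneg_right (factorial_mul_gairingTail_succ_le (by omega)) hT.le
end

section
/- For the Gairing mechanism f*, the optimal set covering price of anarchy 1/(1 + (n-1)*f*(n)) converges to 1 - 1/e as n → ∞. -/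
/-! With `j = n` the tail sum in the numerator of `f*(n)` is empty, so `(n - 1) f*(n) = 1 / D (n - 1)`
where `D m = 1 / (m m!) + ∑_{i=1}^m 1 / i!` is the common denominator. As `m → ∞`, `D m → e - 1`, hence
`1 / (1 + (n - 1) f*(n)) → 1 / (1 + 1 / (e - 1)) = 1 - 1 / e`. -/

open Filter Finset Topology Nat

noncomputable def gairingDenom (m : ℕ) : ℝ :=
  1 / ((m : ℝ) * m !) + ∑ i ∈ Icc 1 m, (1 : ℝ) / i !

theorem tendsto_sum_Icc_one_div_factorial :
    Tendsto (fun m : ℕ => ∑ i ∈ Icc 1 m, (1 : ℝ) / i !) atTop (𝓝 (Real.exp 1 - 1)) := by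
  have hsum : HasSum (fun i : ℕ => (1 : ℝ) / i !) (Real.exp 1) := by
    simpa [Real.exp_eq_exp_ℝ] using NormedSpace.expSeries_div_hasSum_exp (1 : ℝ)
  have hshift := ((hasSum_nat_add_iff' 1).mpr hsum).tendsto_sum_nat
  simp only [range_one, sum_singleton, factorial_zero, cast_one, div_one] at hshift
  refine hshift.congr fun m => ?_
  induction m with
  | zero => simp
  | succ m ih => rw [sum_range_succ, sum_Icc_succ_top (by omega), ih]

theorem tendsto_one_div_mul_factorial :
    Tendsto (fun m : ℕ => 1 / ((m : ℝ) * m !)) atTop (𝓝 0) := by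
  have hmul : Tendsto (fun m : ℕ => m * m !) atTop atTop :=
    tendsto_atTop_mono (fun m => Nat.le_mul_of_pos_right m m.factorial_pos) tendsto_id
  exact ((tendsto_one_div_atTop_nhds_zero_nat (𝕜 := ℝ)).comp hmul).congr fun m => by simp

theorem tendsto_gairingDenom : Tendsto gairingDenom atTop (𝓝 (Real.exp 1 - 1)) := by
  have := tendsto_one_div_mul_factorial.add tendsto_sum_Icc_one_div_factorial
  rwa [zero_add] at this

theorem cast_mul_gairing_succ_self (m : ℕ) :
    m * gairing (m + 1) (m + 1) = (gairingDenom m)⁻¹ := by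
  rcases m.eq_zero_or_pos with rfl | hm
  · -- both sides are `0`, by the conventions `1 / 0 = 0` and `0⁻¹ = 0`
    simp [gairingDenom]
  · have : (m : ℝ) * m ! ≠ 0 := by positivity
    simp only [gairing, gairingDenom, add_tsub_cancel_right, Icc_eq_empty_of_lt (lt_add_one m),
      sum_empty, add_zero]
    field_simp

theorem stmt_14 :
    Filter.Tendsto (fun n : ℕ => 1 / (1 + ((n : ℝ) - 1) * gairing n n))
      Filter.atTop (nhds (1 - 1 / Real.exp 1)) := by
  have he : 0 < Real.exp 1 - 1 := by linarith [Real.exp_one_gt_d9]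
  rw [← tendsto_add_atTop_iff_nat 1]
  have := ((tendsto_gairingDenom.inv₀ he.ne').const_add 1).inv₀ (by positivity)
  convert this using 2 with m
  · push_cast
    rw [add_sub_cancel_right, cast_mul_gairing_succ_self, one_div]
  · field_simp
    ring
end
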